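/- If each f_i : ℝ^p → ℝ is convex and differentiable with L-Lipschitz continuous gradient, and g = (1/n)∑ f_i with minimizer x*, then ∑_{i=1}^n ‖f_i'(x) - f_i'(x*)‖² ≤ n·L·⟨g'(x), x - x*⟩ for all x. -/

import Mathlib

open scoped RealInnerProductSpace

variable {p : ℕ}
local notation "E" => EuclideanSpace ℝ (Fin p)

lemma lineDeriv_aux {f : E → ℝ} {f' : E → E} (hd : ∀ x, HasGradientAt f (f' x) x)
    (x d : E) (t : ℝ) :
    HasDerivAt (fun s : ℝ => f (x + s • d)) ⟪f' (x + t • d), d⟫ t := by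
  have hc : HasDerivAt (fun s : ℝ => x + s • d) d t := by
    simpa using ((hasDerivAt_id t).smul_const d).const_add x
  have hf := (hasGradientAt_iff_hasFDerivAt.mp (hd (x + t • d)))
  have := hf.comp_hasDerivAt t hc
  simpa [InnerProductSpace.toDual_apply_apply, Function.comp_def] using this

lemma first_order {f : E → ℝ} {f' : E → E} (hconv : ConvexOn ℝ Set.univ f)
    (hd : ∀ x, HasGradientAt f (f' x) x) (x y : E) :
    f x + ⟪f' x, y - x⟫ ≤ f y := by
  set d := y - x with hdd
  have hphi : ConvexOn ℝ Set.univ (fun s : ℝ => f (x + s • d)) := by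
    have := hconv.comp_affineMap (AffineMap.lineMap x y)
    have he : (fun s : ℝ => f (x + s • d)) = (f ∘ (AffineMap.lineMap x y)) := by
      funext s; simp only [Function.comp_apply, AffineMap.lineMap_apply_module, hdd]; congr 1; module
    rw [he]
    simpa using this
  have h0 : HasDerivAt (fun s : ℝ => f (x + s • d)) ⟪f' x, d⟫ 0 := by
    simpa using lineDeriv_aux hd x d 0
  have := hphi.le_slope_of_hasDerivAt (Set.mem_univ 0) (Set.mem_univ 1) one_pos h0
  have h1 : x + (1:ℝ) • d = y := by simp [hdd]
  have h0' : x + (0:ℝ) • d = x := by simp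
  rw [slope_def_field, h1, h0'] at this
  rw [show (1:ℝ) - 0 = 1 by norm_num, div_one] at this
  linarith

lemma descent {f : E → ℝ} {f' : E → E} {L : ℝ}
    (hd : ∀ x, HasGradientAt f (f' x) x)
    (hlip : ∀ x y, ‖f' x - f' y‖ ≤ L * ‖x - y‖) (x y : E) :
    f y ≤ f x + ⟪f' x, y - x⟫ + L / 2 * ‖y - x‖ ^ 2 := by
  set d := y - x with hdd
  set ψ : ℝ → ℝ := fun s => L * s ^ 2 / 2 * ‖d‖ ^ 2 + s * ⟪f' x, d⟫ - f (x + s • d) with hψ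
  have hder : ∀ s : ℝ, HasDerivAt ψ
      (L * s * ‖d‖ ^ 2 + ⟪f' x, d⟫ - ⟪f' (x + s • d), d⟫) s := by
    intro s
    have h1 : HasDerivAt (fun s : ℝ => L * s ^ 2 / 2 * ‖d‖ ^ 2) (L * s * ‖d‖ ^ 2) s := by
      have := ((hasDerivAt_pow 2 s).const_mul L).div_const 2
      have := this.mul_const (‖d‖ ^ 2)
      exact this.congr_deriv (by push_cast; ring)
    have h2 : HasDerivAt (fun s : ℝ => s * ⟪f' x, d⟫) (⟪f' x, d⟫) s := by
      simpa using (hasDerivAt_id s).mul_const (⟪f' x, d⟫ : ℝ)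
    exact (h1.add h2).sub (lineDeriv_aux hd x d s)
  have hmono : MonotoneOn ψ (Set.Icc (0:ℝ) 1) := by
    apply monotoneOn_of_deriv_nonneg (convex_Icc 0 1)
    · exact (Continuous.continuousOn (by
        have : Differentiable ℝ ψ := fun s => (hder s).differentiableAt
        exact this.continuous))
    · intro s _; exact (hder s).differentiableAt.differentiableWithinAt
    · intro s hs
      rw [interior_Icc] at hs
      rw [(hder s).deriv]
      have hb : ⟪f' (x + s • d) - f' x, d⟫ ≤ ‖f' (x + s • d) - f' x‖ * ‖d‖ :=
        real_inner_le_norm _ _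
      have hl : ‖f' (x + s • d) - f' x‖ ≤ L * (s * ‖d‖) := by
        have := hlip (x + s • d) x
        simpa [norm_smul, abs_of_nonneg hs.1.le, mul_assoc] using this
      have hd2 : ⟪f' (x + s • d) - f' x, d⟫ ≤ L * s * ‖d‖ ^ 2 := by
        calc ⟪f' (x + s • d) - f' x, d⟫ ≤ ‖f' (x + s • d) - f' x‖ * ‖d‖ := hb
          _ ≤ L * (s * ‖d‖) * ‖d‖ := by
              apply mul_le_mul_of_nonneg_right hl (norm_nonneg _)
          _ = L * s * ‖d‖ ^ 2 := by ring
      rw [inner_sub_left] at hd2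
      linarith
  have h01 := hmono (Set.mem_Icc.mpr ⟨le_refl 0, zero_le_one⟩)
      (Set.mem_Icc.mpr ⟨zero_le_one, le_refl 1⟩) zero_le_one
  have e0 : ψ 0 = -f x := by simp [hψ]
  have e1 : ψ 1 = L / 2 * ‖d‖ ^ 2 + ⟪f' x, d⟫ - f y := by
    simp [hψ, hdd]
  rw [e0, e1] at h01
  linarith

lemma bregman {f : E → ℝ} {f' : E → E} {L : ℝ} (hLpos : 0 < L)
    (hconv : ConvexOn ℝ Set.univ f)
    (hd : ∀ x, HasGradientAt f (f' x) x)
    (hlip : ∀ x y, ‖f' x - f' y‖ ≤ L * ‖x - y‖) (x y : E) :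
    f x + ⟪f' x, y - x⟫ + 1 / (2 * L) * ‖f' y - f' x‖ ^ 2 ≤ f y := by
  set c := f' y - f' x with hc
  set z := y - L⁻¹ • c with hz
  have h1 : f x + ⟪f' x, z - x⟫ ≤ f z := first_order hconv hd x z
  have h2 : f z ≤ f y + ⟪f' y, z - y⟫ + L / 2 * ‖z - y‖ ^ 2 := descent hd hlip y z
  have hzy : z - y = -(L⁻¹ • c) := by rw [hz]; abel
  have hzx : z - x = (y - x) - L⁻¹ • c := by rw [hz]; abel
  have e1 : ⟪f' x, z - x⟫ = ⟪f' x, y - x⟫ - L⁻¹ * ⟪f' x, c⟫ := by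
    rw [hzx, inner_sub_right, real_inner_smul_right]
  have e2 : ⟪f' y, z - y⟫ = -(L⁻¹ * ⟪f' y, c⟫) := by
    rw [hzy, inner_neg_right, real_inner_smul_right]
  have e3 : ‖z - y‖ ^ 2 = L⁻¹ ^ 2 * ‖c‖ ^ 2 := by
    rw [hzy, norm_neg, norm_smul]
    rw [Real.norm_eq_abs, abs_of_nonneg (inv_nonneg.mpr hLpos.le)]
    ring
  have e4 : ⟪f' y, c⟫ - ⟪f' x, c⟫ = ‖c‖ ^ 2 := by
    rw [← inner_sub_left, ← hc, real_inner_self_eq_norm_sq]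
  have hL : L ≠ 0 := hLpos.ne'
  rw [e1] at h1; rw [e2, e3] at h2
  have key : f x + ⟪f' x, y - x⟫ - L⁻¹ * ⟪f' x, c⟫ ≤
      f y - L⁻¹ * ⟪f' y, c⟫ + L / 2 * (L⁻¹ ^ 2 * ‖c‖ ^ 2) := by linarith
  have : L⁻¹ * (⟪f' y, c⟫ - ⟪f' x, c⟫) = L⁻¹ * ‖c‖ ^ 2 := by rw [e4]
  have hfin : 1 / (2 * L) * ‖c‖ ^ 2 = L⁻¹ * ‖c‖ ^ 2 - L / 2 * (L⁻¹ ^ 2 * ‖c‖ ^ 2) := by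
    field_simp; ring
  nlinarith [key, this]

lemma coco {f : E → ℝ} {f' : E → E} {L : ℝ} (hLpos : 0 < L)
    (hconv : ConvexOn ℝ Set.univ f)
    (hd : ∀ x, HasGradientAt f (f' x) x)
    (hlip : ∀ x y, ‖f' x - f' y‖ ≤ L * ‖x - y‖) (x y : E) :
    ‖f' x - f' y‖ ^ 2 ≤ L * ⟪f' x - f' y, x - y⟫ := by
  have b1 := bregman hLpos hconv hd hlip x y
  have b2 := bregman hLpos hconv hd hlip y x
  have hn : ‖f' x - f' y‖ = ‖f' y - f' x‖ := by rw [norm_sub_rev]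
  have hadd : ⟪f' x, y - x⟫ + ⟪f' y, x - y⟫ + 1 / L * ‖f' x - f' y‖ ^ 2 ≤ 0 := by
    rw [hn] at b2 ⊢
    have h3 : 1 / (2 * L) + 1 / (2 * L) = 1 / L := by
      rw [← add_div]; rw [show (2:ℝ) * L = L * 2 by ring]; field_simp; ring
    nlinarith [b1, b2, h3]
  have hsimp : ⟪f' x, y - x⟫ + ⟪f' y, x - y⟫ = -⟪f' x - f' y, x - y⟫ := by
    rw [show (y - x) = -(x - y) by abel, inner_neg_right, inner_sub_left]
    ring
  rw [hsimp] at hadd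
  have h2 : 1 / L * ‖f' x - f' y‖ ^ 2 ≤ ⟪f' x - f' y, x - y⟫ := by linarith
  calc ‖f' x - f' y‖ ^ 2 = L * (1 / L * ‖f' x - f' y‖ ^ 2) := by
        rw [← mul_assoc, mul_one_div, div_self hLpos.ne', one_mul]
    _ ≤ L * ⟪f' x - f' y, x - y⟫ := by
        apply mul_le_mul_of_nonneg_left h2 hLpos.le


theorem stmt0 {p n : ℕ} (hn : 0 < n)
    (f : Fin n → EuclideanSpace ℝ (Fin p) → ℝ)
    (f' : Fin n → EuclideanSpace ℝ (Fin p) → EuclideanSpace ℝ (Fin p))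
    (L : ℝ) (hL : 0 ≤ L)
    (hconv : ∀ i, ConvexOn ℝ Set.univ (f i))
    (hdiff : ∀ i x, HasGradientAt (f i) (f' i x) x)
    (hlip : ∀ i x y, ‖f' i x - f' i y‖ ≤ L * ‖x - y‖)
    (g : EuclideanSpace ℝ (Fin p) → ℝ)
    (hg : g = fun x => (1 / n : ℝ) * ∑ i, f i x)
    (g' : EuclideanSpace ℝ (Fin p) → EuclideanSpace ℝ (Fin p))
    (hg' : ∀ x, g' x = (1 / n : ℝ) • ∑ i, f' i x)
    (xs : EuclideanSpace ℝ (Fin p)) (hmin : ∀ x, g xs ≤ g x) :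
    ∀ x, ∑ i, ‖f' i x - f' i xs‖ ^ 2 ≤ n * L * ⟪g' x, x - xs⟫ := by
  intro x
  have hnR : (n : ℝ) ≠ 0 := Nat.cast_ne_zero.mpr hn.ne'
  -- gradient of g at xs is (1/n) • ∑ f' i xs, and it vanishes at the minimizer
  have hsum0 : ∑ i, f' i xs = 0 := by
    have hfd : HasFDerivAt g
        ((InnerProductSpace.toDual ℝ (EuclideanSpace ℝ (Fin p)))
          ((1 / n : ℝ) • ∑ i, f' i xs)) xs := by
      have hsum : HasFDerivAt (fun y => ∑ i, f i y)
          (∑ i, (InnerProductSpace.toDual ℝ (EuclideanSpace ℝ (Fin p))) (f' i xs)) xs :=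
        HasFDerivAt.fun_sum (fun i _ => hasGradientAt_iff_hasFDerivAt.mp (hdiff i xs))
      have := hsum.const_mul (1 / n : ℝ)
      rw [hg]
      refine this.congr_fderiv ?_
      simp [map_sum, map_smulₛₗ]
    have hloc : IsLocalMin g xs := Filter.Eventually.of_forall hmin
    have hzero := hloc.hasFDerivAt_eq_zero hfd
    have : ((1 / n : ℝ) • ∑ i, f' i xs) = 0 := by
      have := congrArg (fun T => (InnerProductSpace.toDual ℝ _).symm T) hzero
      simpa using this
    rcases smul_eq_zero.mp this with h | h
    · exact absurd h (by simp [hnR])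
    · exact h
  rcases hL.eq_or_lt with hL0 | hLpos
  · -- L = 0 : all gradients are equal, both sides vanish
    have hz : ∀ i, f' i x - f' i xs = 0 := by
      intro i
      have := hlip i x xs
      rw [← hL0] at this
      simpa using norm_le_zero_iff.mp (by simpa using this)
    have : ∑ i, ‖f' i x - f' i xs‖ ^ 2 = 0 := by
      apply Finset.sum_eq_zero; intro i _; rw [hz i]; simp
    rw [this, ← hL0]
    simp
  · have key : ∀ i, ‖f' i x - f' i xs‖ ^ 2 ≤ L * ⟪f' i x - f' i xs, x - xs⟫ :=
      fun i => coco hLpos (hconv i) (hdiff i) (hlip i) x xs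
    calc ∑ i, ‖f' i x - f' i xs‖ ^ 2
        ≤ ∑ i, L * ⟪f' i x - f' i xs, x - xs⟫ :=
          Finset.sum_le_sum (fun i _ => key i)
      _ = L * ⟪∑ i, (f' i x - f' i xs), x - xs⟫ := by
          rw [← Finset.mul_sum, sum_inner]
      _ = L * ⟪∑ i, f' i x, x - xs⟫ := by
          rw [Finset.sum_sub_distrib, hsum0, sub_zero]
      _ = n * L * ⟪g' x, x - xs⟫ := by
          rw [hg' x, real_inner_smul_left]
          field_simp
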